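/- arXiv:math/0604081 — 3 statements merged into one kernel-verified Lean document; each statement's English description precedes it below -/
import Mathlib

section
/- Let b ≥ 0, a ∈ ℝ, and N ≥ 4. Then Z₁ := ∫_{−√N}^{√N} (1 − ε²/N)^{(N−3)/2} exp(aε − bε²/2) dε satisfies Z₁ ≥ (1/L) exp(−L a²) for a constant L depending only on b (not on N or a). -/
/-!
On `[0, 1]` the integrand is bounded below by `exp (-(1 + |a| + b / 2))`: the tilt
`exp (a ε - b ε² / 2)` is at least `exp (-|a| - b / 2)` there, and
`(1 - ε² / N) ^ ((N - 3) / 2) ≥ exp (-ε²)` as soon as `2 ε² ≤ N`, because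
`1 - x ≥ exp (-2 x)` for `0 ≤ x ≤ 1 / 2`. Since `[0, 1] ⊆ [-√N, √N]` and the integrand is
nonnegative, `Z₁ ≥ exp (-(1 + |a| + b / 2))`, and `|a| ≤ 1 / 4 + a²` turns this into the
claim with `L = exp (3 / 2 + b / 2)`.
-/

open MeasureTheory Real

lemma exp_neg_two_mul_le_one_sub {x : ℝ} (hx₀ : 0 ≤ x) (hx : x ≤ 1 / 2) :
    exp (-(2 * x)) ≤ 1 - x := by
  rw [exp_neg, inv_le_iff_one_le_mul₀ (exp_pos _)]
  nlinarith [add_one_le_exp (2 * x)]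

lemma exp_neg_sq_le_one_sub_sq_div_rpow {N ε : ℝ} (hN : 3 ≤ N) (hε : 2 * ε ^ 2 ≤ N) :
    exp (-ε ^ 2) ≤ (1 - ε ^ 2 / N) ^ ((N - 3) / 2) := by
  have hN₀ : 0 < N := by linarith
  have hx₀ : 0 ≤ ε ^ 2 / N := by positivity
  have hx : ε ^ 2 / N ≤ 1 / 2 := by rw [div_le_iff₀ hN₀]; linarith
  have hp : 0 ≤ (N - 3) / 2 := by linarith
  calc exp (-ε ^ 2)
      ≤ exp (-(2 * (ε ^ 2 / N)) * ((N - 3) / 2)) := by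
        refine exp_le_exp.2 ?_
        rw [show -(2 * (ε ^ 2 / N)) * ((N - 3) / 2) = -ε ^ 2 + 3 * (ε ^ 2 / N) by field_simp; ring]
        linarith
    _ = exp (-(2 * (ε ^ 2 / N))) ^ ((N - 3) / 2) := exp_mul _ _
    _ ≤ (1 - ε ^ 2 / N) ^ ((N - 3) / 2) :=
        rpow_le_rpow (exp_pos _).le (exp_neg_two_mul_le_one_sub hx₀ hx) hp

section Integrand

variable {N p : ℝ} (a b : ℝ)

lemma continuous_one_sub_sq_div_rpow_mul_exp (hp : 0 ≤ p) :
    Continuous fun ε : ℝ => (1 - ε ^ 2 / N) ^ p * exp (a * ε - b * ε ^ 2 / 2) :=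
  ((continuous_rpow_const hp).comp (by fun_prop)).mul (by fun_prop)

lemma one_sub_sq_div_rpow_mul_exp_nonneg {ε : ℝ} (hε : ε ∈ Set.Icc (-√N) √N) :
    0 ≤ (1 - ε ^ 2 / N) ^ p * exp (a * ε - b * ε ^ 2 / 2) := by
  refine mul_nonneg (rpow_nonneg ?_ _) (exp_pos _).le
  rw [sub_nonneg]
  rcases le_or_gt N 0 with hN | hN
  · exact (div_nonpos_of_nonneg_of_nonpos (sq_nonneg ε) hN).trans zero_le_one
  · exact div_le_one_of_le₀ ((Real.sq_le hN.le).2 hε) hN.le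

lemma exp_neg_le_one_sub_sq_div_rpow_mul_exp (hb : 0 ≤ b) (hN : 3 ≤ N) {ε : ℝ}
    (hε : ε ∈ Set.Icc (0 : ℝ) 1) :
    exp (-(1 + |a| + b / 2)) ≤ (1 - ε ^ 2 / N) ^ ((N - 3) / 2) * exp (a * ε - b * ε ^ 2 / 2) := by
  obtain ⟨hε₀, hε₁⟩ := hε
  have hε2 : ε ^ 2 ≤ 1 := by nlinarith
  have htilt : -|a| - b / 2 ≤ a * ε - b * ε ^ 2 / 2 := by
    nlinarith [neg_abs_le a, abs_nonneg a]
  calc exp (-(1 + |a| + b / 2))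
      ≤ exp (-ε ^ 2) * exp (a * ε - b * ε ^ 2 / 2) := by
        rw [← exp_add]; exact exp_le_exp.2 (by linarith)
    _ ≤ (1 - ε ^ 2 / N) ^ ((N - 3) / 2) * exp (a * ε - b * ε ^ 2 / 2) := by
        gcongr
        exact exp_neg_sq_le_one_sub_sq_div_rpow hN (by linarith)

lemma exp_neg_le_setIntegral_one_sub_sq_div_rpow_mul_exp (hb : 0 ≤ b) (hN : 3 ≤ N) :
    exp (-(1 + |a| + b / 2)) ≤ ∫ ε in Set.Icc (-√N) √N,
      (1 - ε ^ 2 / N) ^ ((N - 3) / 2) * exp (a * ε - b * ε ^ 2 / 2) := by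
  have hsqrt : 1 ≤ √N := one_le_sqrt.2 (by linarith)
  have hsub : Set.Icc (0 : ℝ) 1 ⊆ Set.Icc (-√N) √N :=
    Set.Icc_subset_Icc (by linarith) hsqrt
  have hint := (continuous_one_sub_sq_div_rpow_mul_exp (N := N) a b
    (by linarith : 0 ≤ (N - 3) / 2)).integrableOn_Icc (μ := volume) (a := -√N) (b := √N)
  calc exp (-(1 + |a| + b / 2))
      = exp (-(1 + |a| + b / 2)) * volume.real (Set.Icc (0 : ℝ) 1) := by
        simp [volume_real_Icc_of_le zero_le_one]
    _ ≤ ∫ ε in Set.Icc (0 : ℝ) 1, (1 - ε ^ 2 / N) ^ ((N - 3) / 2) * exp (a * ε - b * ε ^ 2 / 2) :=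
        setIntegral_ge_of_const_le_real measurableSet_Icc (by simp)
          (fun _ hε => exp_neg_le_one_sub_sq_div_rpow_mul_exp a b hb hN hε) (hint.mono_set hsub)
    _ ≤ _ := setIntegral_mono_set hint
        (ae_restrict_of_forall_mem measurableSet_Icc
          fun _ hε => one_sub_sq_div_rpow_mul_exp_nonneg a b hε)
        hsub.eventuallyLE

end Integrand

theorem Z1_lower_bound (b : ℝ) (hb : 0 ≤ b) :
    ∃ L : ℝ, 0 < L ∧ ∀ (a : ℝ) (N : ℕ), 4 ≤ N →
      (1 / L) * Real.exp (-L * a ^ 2)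
        ≤ ∫ ε in Set.Icc (-Real.sqrt N) (Real.sqrt N),
            (1 - ε ^ 2 / N) ^ (((N : ℝ) - 3) / 2)
              * Real.exp (a * ε - b * ε ^ 2 / 2) := by
  refine ⟨exp (3 / 2 + b / 2), exp_pos _, fun a N hN => ?_⟩
  have hL : 1 ≤ exp (3 / 2 + b / 2) := one_le_exp (by linarith)
  have hN3 : (3 : ℝ) ≤ N := by exact_mod_cast (by omega : 3 ≤ N)
  calc 1 / exp (3 / 2 + b / 2) * exp (-exp (3 / 2 + b / 2) * a ^ 2)
      = exp (-(3 / 2 + b / 2) - exp (3 / 2 + b / 2) * a ^ 2) := by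
        rw [one_div, ← exp_neg, ← exp_add]; ring_nf
    _ ≤ exp (-(1 + |a| + b / 2)) := by
        refine exp_le_exp.2 ?_
        nlinarith [sq_nonneg (|a| - 1 / 2), sq_abs a, mul_le_mul_of_nonneg_right hL (sq_nonneg a)]
    _ ≤ _ := exp_neg_le_setIntegral_one_sub_sq_div_rpow_mul_exp a b hb hN3
end

section
/- Let φ be twice continuously differentiable on an open interval containing [x₀ − ω, x₀ + ω] ⊂ (−1,1), with φ'(x₀) = 0 and −L ≤ φ''(x) ≤ −1 on this interval for some L ≥ 1. Then for all N ≥ 1, ∫_{x₀−ω}^{x₀+ω} exp(Nφ(x)) dx ≥ exp(Nφ(x₀)) · (1/√N) ∫_{|y| ≤ ω√N} exp(−L y²) dy, and ∫_{[−1,1] \ [x₀−ω, x₀+ω]} exp(Nφ(x)) dx ≤ exp(Nφ(x₀)) · (2/√N) ∫_{|y| ≥ ω√N} exp(−y²/2) dy, provided φ(x) ≤ φ(x₀) − (x−x₀)²/2 holds for all x ∈ [−1,1]. -/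
open MeasureTheory Real

/-!
Adding `L (x - x₀)² / 2` to `φ` gives a function that is convex on `[x₀ - ω, x₀ + ω]` and critical
at `x₀`, hence minimal there; so `φ ≥ φ x₀ - L (x - x₀)² / 2` on that interval, while off it
`φ ≤ φ x₀ - (x - x₀)² / 2` by hypothesis. Exponentiating these Gaussian comparisons, integrating,
and substituting `y = √N (x - x₀)` gives both estimates; the tail estimate even holds with
`1 / √N` in place of `2 / √N`.
-/

theorem sub_half_mul_sq_le_of_neg_le_deriv2 {φ : ℝ → ℝ} {s : Set ℝ} {x₀ L : ℝ}
    (hs : Convex ℝ s) (hx₀ : x₀ ∈ interior s) (hcont : ContinuousOn φ s)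
    (hφ : DifferentiableOn ℝ φ (interior s)) (hφ' : DifferentiableOn ℝ (deriv φ) (interior s))
    (hcrit : deriv φ x₀ = 0) (hcurv : ∀ x ∈ interior s, -L ≤ deriv (deriv φ) x) :
    ∀ x ∈ s, φ x₀ - L / 2 * (x - x₀) ^ 2 ≤ φ x := by
  set ψ : ℝ → ℝ := fun x ↦ φ x + L / 2 * (x - x₀) ^ 2
  have hquad : ∀ x, HasDerivAt (fun x ↦ L / 2 * (x - x₀) ^ 2) (L * (x - x₀)) x := fun x ↦ by
    refine ((((hasDerivAt_id' x).sub_const x₀).fun_pow 2).const_mul (L / 2)).congr_deriv ?_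
    norm_num; ring
  have hψ' : ∀ x ∈ interior s, HasDerivAt ψ (deriv φ x + L * (x - x₀)) x := fun x hx ↦
    ((hφ x hx).differentiableAt (isOpen_interior.mem_nhds hx)).hasDerivAt.fun_add (hquad x)
  have hψ'' : ∀ x ∈ interior s,
      HasDerivAt (fun x ↦ deriv φ x + L * (x - x₀)) (deriv (deriv φ) x + L) x := fun x hx ↦ by
    simpa using ((hφ' x hx).differentiableAt (isOpen_interior.mem_nhds hx)).hasDerivAt.fun_add
      (((hasDerivAt_id' x).sub_const x₀).const_mul L)
  have hconvex : ConvexOn ℝ s ψ :=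
    convexOn_of_hasDerivWithinAt2_nonneg hs (hcont.add (by fun_prop))
      (fun x hx ↦ (hψ' x hx).hasDerivWithinAt) (fun x hx ↦ (hψ'' x hx).hasDerivWithinAt)
      (fun x hx ↦ by linarith [hcurv x hx])
  have hmin : IsMinOn ψ s x₀ := hconvex.isMinOn_of_rightDeriv_eq_zero hx₀ <| by
    rw [(hψ' x₀ hx₀).hasDerivWithinAt.derivWithin (uniqueDiffWithinAt_Ioi x₀), hcrit]; simp
  intro x hx
  simpa [ψ] using hmin hx

theorem setIntegral_preimage_mul_sub (c x₀ : ℝ) {s : Set ℝ} (hs : MeasurableSet s)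
    (h : ℝ → ℝ) :
    ∫ x in (fun x ↦ c * (x - x₀)) ⁻¹' s, h (c * (x - x₀)) = |c⁻¹| * ∫ y in s, h y := by
  have hmeas : MeasurableSet ((fun x ↦ c * (x - x₀)) ⁻¹' s) := (by fun_prop : Measurable _) hs
  rw [← integral_indicator hmeas, ← integral_indicator hs, ← smul_eq_mul,
    ← Measure.integral_comp_mul_left (s.indicator h) c,
    ← integral_sub_right_eq_self (fun x ↦ s.indicator h (c * x)) x₀]
  -- `(f ⁻¹' s).indicator (h ∘ f) = s.indicator h ∘ f` holds definitionally
  rfl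

theorem laplace_lower_bound {φ : ℝ → ℝ} {x₀ ω L t : ℝ} (hL : 0 ≤ L) (ht : 0 < t)
    (hcont : ContinuousOn φ (Set.Icc (x₀ - ω) (x₀ + ω)))
    (hφ : ∀ x ∈ Set.Icc (x₀ - ω) (x₀ + ω), φ x₀ - L / 2 * (x - x₀) ^ 2 ≤ φ x) :
    exp (t * φ x₀) * ((1 / √t) * ∫ y in Set.Icc (-(ω * √t)) (ω * √t), exp (-L * y ^ 2))
      ≤ ∫ x in Set.Icc (x₀ - ω) (x₀ + ω), exp (t * φ x) := by
  have hst : 0 < √t := sqrt_pos.2 ht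
  have hK : (fun x ↦ √t * (x - x₀)) ⁻¹' Set.Icc (-(ω * √t)) (ω * √t)
      = Set.Icc (x₀ - ω) (x₀ + ω) := by
    ext x
    rw [Set.mem_preimage, ← Set.mem_Icc_iff_abs_le, Set.mem_Icc, ← abs_le, abs_mul,
      abs_of_pos hst, mul_comm ω, mul_le_mul_iff_right₀ hst, abs_sub_comm]
  calc exp (t * φ x₀) * ((1 / √t) * ∫ y in Set.Icc (-(ω * √t)) (ω * √t), exp (-L * y ^ 2))
      = ∫ x in Set.Icc (x₀ - ω) (x₀ + ω), exp (t * φ x₀) * exp (-L * (√t * (x - x₀)) ^ 2) := by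
        rw [integral_const_mul, ← hK,
          setIntegral_preimage_mul_sub _ _ measurableSet_Icc (fun y ↦ exp (-L * y ^ 2)),
          abs_of_pos (inv_pos.2 hst), one_div]
    _ ≤ ∫ x in Set.Icc (x₀ - ω) (x₀ + ω), exp (t * φ x) := by
        refine setIntegral_mono_on (Continuous.integrableOn_Icc (by fun_prop))
          (continuous_exp.comp_continuousOn (hcont.const_smul t)).integrableOn_Icc
          measurableSet_Icc fun x hx ↦ ?_
        rw [← exp_add, exp_le_exp, mul_pow, sq_sqrt ht.le]
        nlinarith [mul_le_mul_of_nonneg_left (hφ x hx) ht.le,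
          mul_nonneg (mul_nonneg hL ht.le) (sq_nonneg (x - x₀))]

theorem integrable_exp_neg_sq_div_two : Integrable fun y : ℝ ↦ exp (-y ^ 2 / 2) := by
  simpa [neg_div, div_eq_inv_mul] using integrable_exp_neg_mul_sq (by norm_num : (0 : ℝ) < 1 / 2)

theorem laplace_tail_bound {φ : ℝ → ℝ} {x₀ ω t : ℝ} {s : Set ℝ} (ht : 0 < t)
    (hs : MeasurableSet s) (hφ : ∀ x ∈ s, φ x ≤ φ x₀ - (x - x₀) ^ 2 / 2) :
    ∫ x in s \ Set.Icc (x₀ - ω) (x₀ + ω), exp (t * φ x)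
      ≤ exp (t * φ x₀) * ((1 / √t) * ∫ y in {y | ω * √t ≤ |y|}, exp (-y ^ 2 / 2)) := by
  have hst : 0 < √t := sqrt_pos.2 ht
  set g : ℝ → ℝ := fun x ↦ exp (-(√t * (x - x₀)) ^ 2 / 2)
  have hg : Integrable g :=
    (integrable_exp_neg_sq_div_two.comp_mul_left' hst.ne').comp_sub_right x₀
  have hT : s \ Set.Icc (x₀ - ω) (x₀ + ω) ⊆ (fun x ↦ √t * (x - x₀)) ⁻¹' {y | ω * √t ≤ |y|} := by
    rintro x ⟨-, hx⟩
    rw [← Set.mem_Icc_iff_abs_le, not_le, abs_sub_comm] at hx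
    rw [Set.mem_preimage, Set.mem_ofPred_eq, abs_mul, abs_of_pos hst, mul_comm]
    exact mul_le_mul_of_nonneg_left hx.le hst.le
  calc ∫ x in s \ Set.Icc (x₀ - ω) (x₀ + ω), exp (t * φ x)
      ≤ ∫ x in s \ Set.Icc (x₀ - ω) (x₀ + ω), exp (t * φ x₀) * g x := by
        refine integral_mono_of_nonneg (ae_of_all _ fun x ↦ (exp_pos _).le)
          (hg.const_mul _).integrableOn
          ((ae_restrict_iff' (hs.diff measurableSet_Icc)).2 (ae_of_all _ fun x hx ↦ ?_))
        dsimp only [g]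
        rw [← exp_add, exp_le_exp, mul_pow, sq_sqrt ht.le]
        nlinarith [mul_le_mul_of_nonneg_left (hφ x hx.1) ht.le]
    _ = exp (t * φ x₀) * ∫ x in s \ Set.Icc (x₀ - ω) (x₀ + ω), g x := integral_const_mul _ _
    _ ≤ exp (t * φ x₀) * ∫ x in (fun x ↦ √t * (x - x₀)) ⁻¹' {y | ω * √t ≤ |y|}, g x := by
        refine mul_le_mul_of_nonneg_left ?_ (exp_pos _).le
        exact setIntegral_mono_set hg.integrableOn (ae_of_all _ fun x ↦ (exp_pos _).le)
          hT.eventuallyLE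
    _ = exp (t * φ x₀) * ((1 / √t) * ∫ y in {y | ω * √t ≤ |y|}, exp (-y ^ 2 / 2)) := by
        rw [setIntegral_preimage_mul_sub _ _ (measurableSet_le measurable_const measurable_abs)
          (fun y ↦ exp (-y ^ 2 / 2)), abs_of_pos (inv_pos.2 hst), one_div]

theorem laplace_method_estimates (φ : ℝ → ℝ) (x₀ ω L : ℝ)
    (hω : 0 < ω) (hL : 1 ≤ L)
    (hsub : Set.Icc (x₀ - ω) (x₀ + ω) ⊆ Set.Ioo (-1 : ℝ) 1)
    (hφ : ContDiffOn ℝ 2 φ (Set.Ioo (-1 : ℝ) 1))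
    (hcrit : deriv φ x₀ = 0)
    (hcurv : ∀ x ∈ Set.Icc (x₀ - ω) (x₀ + ω),
      -L ≤ deriv (deriv φ) x ∧ deriv (deriv φ) x ≤ -1)
    (hglob : ∀ x ∈ Set.Icc (-1 : ℝ) 1, φ x ≤ φ x₀ - (x - x₀) ^ 2 / 2) :
    ∀ N : ℕ, 1 ≤ N →
      (Real.exp ((N : ℝ) * φ x₀) * ((1 / Real.sqrt N)
          * ∫ y in Set.Icc (-(ω * Real.sqrt N)) (ω * Real.sqrt N),
              Real.exp (-L * y ^ 2))
        ≤ ∫ x in Set.Icc (x₀ - ω) (x₀ + ω), Real.exp ((N : ℝ) * φ x)) ∧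
      ((∫ x in Set.Icc (-1 : ℝ) 1 \ Set.Icc (x₀ - ω) (x₀ + ω),
            Real.exp ((N : ℝ) * φ x))
        ≤ Real.exp ((N : ℝ) * φ x₀) * ((2 / Real.sqrt N)
            * ∫ y in {y : ℝ | ω * Real.sqrt N ≤ |y|}, Real.exp (-y ^ 2 / 2))) := by
  have hx₀ : x₀ ∈ interior (Set.Icc (x₀ - ω) (x₀ + ω)) := by
    rw [interior_Icc]; constructor <;> linarith
  have hinterior : interior (Set.Icc (x₀ - ω) (x₀ + ω)) ⊆ Set.Ioo (-1) 1 :=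
    interior_subset.trans hsub
  have hφ' : DifferentiableOn ℝ (deriv φ) (Set.Ioo (-1) 1) :=
    (hφ.deriv_of_isOpen (m := 1) isOpen_Ioo (by norm_num)).differentiableOn one_ne_zero
  have htaylor := sub_half_mul_sq_le_of_neg_le_deriv2 (convex_Icc _ _) hx₀
    (hφ.continuousOn.mono hsub) ((hφ.differentiableOn (by norm_num)).mono hinterior)
    (hφ'.mono hinterior) hcrit fun x hx ↦ (hcurv x (interior_subset hx)).1
  intro N hN
  have hN : (0 : ℝ) < N := by exact_mod_cast hN
  refine ⟨laplace_lower_bound (by linarith) hN (hφ.continuousOn.mono hsub) htaylor, ?_⟩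
  refine (laplace_tail_bound hN measurableSet_Icc hglob).trans ?_
  gcongr
  exact one_le_two
end

section
/- Let ξ : ℝ → ℝ be three times continuously differentiable and fix q ∈ ℝ. Suppose R, R̂, ε₁, ε₂ are reals with R = √((1−ε₁²/N)(1−ε₂²/N)) R̂ + ε₁ε₂/N, ε₁², ε₂² ≤ N, and |R̂| ≤ 1. Then |N ξ(R) − (N−1) ξ(R̂) − ξ(R̂) + (1/2)(ε₁² + ε₂²) R̂ ξ'(R̂) − ε₁ε₂ ξ'(R̂)| ≤ (L/N)(ε₁⁴ + ε₂⁴), where L depends only on bounds for ξ, ξ', ξ'', ξ''' on [−2,2]. -/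
open Set

private lemma sqrt_quad_bound (a b : ℝ) (ha : 0 ≤ a) (ha1 : a ≤ 1) (hb : 0 ≤ b) (hb1 : b ≤ 1) :
    |Real.sqrt ((1-a)*(1-b)) - 1 + (a+b)/2| ≤ a^2 + b^2 := by
  set w := Real.sqrt ((1-a)*(1-b)) with hw
  have hw0 : 0 ≤ w := Real.sqrt_nonneg _
  have hw2 : w^2 = (1-a)*(1-b) := Real.sq_sqrt (by nlinarith)
  have key : (1 - (a+b-a*b)/2 - w) * (1 - (a+b-a*b)/2 + w) = (a+b-a*b)^2/4 := by
    linear_combination -hw2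
  have hu1 : a + b - a*b ≤ 1 := by nlinarith
  have hu0 : 0 ≤ a + b - a*b := by nlinarith
  have hpos : (1:ℝ)/2 ≤ 1 - (a+b-a*b)/2 + w := by linarith
  have hup : w ≤ 1 - (a+b-a*b)/2 := by nlinarith
  have hlo : 1 - (a+b-a*b)/2 - (a+b-a*b)^2/2 ≤ w := by nlinarith
  rw [abs_le]
  constructor <;> nlinarith [sq_nonneg (a-b), sq_nonneg (a+b)]

set_option maxHeartbeats 1600000 in
theorem xi_taylor_cavity_bound (ξ : ℝ → ℝ) (hξ : ContDiff ℝ 3 ξ) :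
    ∃ L : ℝ, 0 < L ∧ ∀ (N : ℕ), 2 ≤ N → ∀ R Rh ε₁ ε₂ : ℝ,
      R = Real.sqrt ((1 - ε₁ ^ 2 / N) * (1 - ε₂ ^ 2 / N)) * Rh + ε₁ * ε₂ / N →
      ε₁ ^ 2 ≤ (N : ℝ) → ε₂ ^ 2 ≤ (N : ℝ) → |Rh| ≤ 1 →
      |(N : ℝ) * ξ R - ((N : ℝ) - 1) * ξ Rh - ξ Rh
          + (1 / 2) * (ε₁ ^ 2 + ε₂ ^ 2) * Rh * deriv ξ Rh
          - ε₁ * ε₂ * deriv ξ Rh|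
        ≤ L / N * (ε₁ ^ 4 + ε₂ ^ 4) := by
  have hξ' : ContDiff ℝ 2 (deriv ξ) := by
    have h : ContDiff ℝ (2+1) ξ := by norm_num; exact hξ
    exact (contDiff_succ_iff_deriv.mp h).2.2
  have hdξ : Differentiable ℝ ξ := hξ.differentiable (by norm_num)
  have hdξ' : Differentiable ℝ (deriv ξ) := hξ'.differentiable (by norm_num)
  obtain ⟨C₁, hC₁⟩ := (isCompact_Icc (a := (-2:ℝ)) (b := 2)).exists_bound_of_continuousOn
    hξ'.continuous.continuousOn
  obtain ⟨C₂, hC₂⟩ := (isCompact_Icc (a := (-2:ℝ)) (b := 2)).exists_bound_of_continuousOn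
    (hξ'.continuous_deriv (by norm_num)).continuousOn
  obtain ⟨M₁, hM₁⟩ : ∃ x : ℝ, x = |C₁| := ⟨_, rfl⟩
  obtain ⟨M₂, hM₂⟩ : ∃ x : ℝ, x = |C₂| := ⟨_, rfl⟩
  have hM₁0 : 0 ≤ M₁ := hM₁ ▸ abs_nonneg _
  have hM₂0 : 0 ≤ M₂ := hM₂ ▸ abs_nonneg _
  have hB₁ : ∀ x ∈ Icc (-2:ℝ) 2, |deriv ξ x| ≤ M₁ :=
    fun x hx => (hC₁ x hx).trans (hM₁ ▸ le_abs_self _)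
  have hB₂ : ∀ x ∈ Icc (-2:ℝ) 2, |deriv (deriv ξ) x| ≤ M₂ :=
    fun x hx => (hC₂ x hx).trans (hM₂ ▸ le_abs_self _)
  refine ⟨M₁ + 9 * M₂ + 1, by positivity, ?_⟩
  intro N hN R Rh ε₁ ε₂ hR he₁ he₂ hRh
  have hN0 : (0:ℝ) < N := by positivity
  obtain ⟨a, hadef⟩ : ∃ x : ℝ, x = ε₁^2 / (N:ℝ) := ⟨_, rfl⟩
  obtain ⟨b, hbdef⟩ : ∃ x : ℝ, x = ε₂^2 / (N:ℝ) := ⟨_, rfl⟩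
  have ha0 : 0 ≤ a := by rw [hadef]; positivity
  have hb0 : 0 ≤ b := by rw [hbdef]; positivity
  have ha1 : a ≤ 1 := by rw [hadef, div_le_one hN0]; exact he₁
  have hb1 : b ≤ 1 := by rw [hbdef, div_le_one hN0]; exact he₂
  obtain ⟨w, hwdef⟩ : ∃ x : ℝ, x = Real.sqrt ((1-a)*(1-b)) := ⟨_, rfl⟩
  have hw0 : 0 ≤ w := hwdef ▸ Real.sqrt_nonneg _
  have hw1 : w ≤ 1 := by rw [hwdef]; exact Real.sqrt_le_one.mpr (by nlinarith)
  have hkey : |w - 1 + (a+b)/2| ≤ a^2 + b^2 := by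
    rw [hwdef]; exact sqrt_quad_bound a b ha0 ha1 hb0 hb1
  have hkey' := abs_le.mp hkey
  have hReq : R = w * Rh + ε₁ * ε₂ / N := by
    rw [hR, hwdef, hadef, hbdef]
  have hee : |ε₁ * ε₂ / N| ≤ (a + b) / 2 := by
    rw [abs_div, abs_of_pos hN0, div_le_div_iff₀ hN0 two_pos, abs_mul]
    have h1 : |ε₁| * |ε₂| * 2 ≤ ε₁^2 + ε₂^2 := by
      nlinarith [sq_nonneg (|ε₁| - |ε₂|), sq_abs ε₁, sq_abs ε₂]
    calc |ε₁| * |ε₂| * 2 ≤ ε₁^2 + ε₂^2 := h1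
      _ = (a + b) * N := by rw [hadef, hbdef]; field_simp
  have hRh' := abs_le.mp hRh
  have hee' := abs_le.mp hee
  have hδ : |R - Rh| ≤ 2 * (a + b) := by
    have h1 : R - Rh = (w - 1) * Rh + ε₁ * ε₂ / N := by rw [hReq]; ring
    have h2 : |(w - 1) * Rh| ≤ (3/2) * (a + b) := by
      rw [abs_mul]
      have hw' : |w - 1| ≤ (3/2) * (a + b) := by
        rw [abs_le]; constructor
        · nlinarith [hkey'.1, sq_nonneg a, sq_nonneg b]
        · nlinarith
      calc |w - 1| * |Rh| ≤ ((3/2) * (a+b)) * 1 :=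
            mul_le_mul hw' hRh (abs_nonneg _) (by positivity)
        _ = (3/2) * (a + b) := mul_one _
    calc |R - Rh| = |(w - 1) * Rh + ε₁ * ε₂ / N| := by rw [h1]
      _ ≤ |(w - 1) * Rh| + |ε₁ * ε₂ / N| := abs_add_le _ _
      _ ≤ (3/2) * (a + b) + (a + b) / 2 := add_le_add h2 hee
      _ = 2 * (a + b) := by ring
  have hRhmem : Rh ∈ Icc (-2:ℝ) 2 := ⟨by linarith [hRh'.1], by linarith [hRh'.2]⟩
  have hRmem : R ∈ Icc (-2:ℝ) 2 := by
    have hA : |w * Rh| ≤ 1 := by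
      rw [abs_mul, abs_of_nonneg hw0]
      calc w * |Rh| ≤ 1 * 1 := mul_le_mul hw1 hRh (abs_nonneg _) one_pos.le
        _ = 1 := mul_one _
    have hB : |ε₁ * ε₂ / N| ≤ 1 := hee.trans (by linarith)
    have h1 : |R| ≤ 2 := by
      rw [hReq]
      calc |w * Rh + ε₁ * ε₂ / N| ≤ |w * Rh| + |ε₁ * ε₂ / N| := abs_add_le _ _
        _ ≤ 1 + 1 := add_le_add hA hB
        _ = 2 := by norm_num
    have h2 := abs_le.mp h1
    exact ⟨h2.1, h2.2⟩
  have hlip : ∀ x ∈ Icc (-2:ℝ) 2, |deriv ξ x - deriv ξ Rh| ≤ M₂ * |x - Rh| := by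
    intro x hx
    have := Convex.norm_image_sub_le_of_norm_hasDerivWithin_le
      (f := deriv ξ) (f' := deriv (deriv ξ)) (s := Icc (-2:ℝ) 2)
      (fun y _ => (hdξ' y).hasDerivAt.hasDerivWithinAt)
      (fun y hy => by simpa [Real.norm_eq_abs] using hB₂ y hy)
      (convex_Icc _ _) hRhmem hx
    simpa [Real.norm_eq_abs] using this
  have hsub : segment ℝ Rh R ⊆ Icc (-2:ℝ) 2 := (convex_Icc _ _).segment_subset hRhmem hRmem
  have hseg : ∀ x ∈ segment ℝ Rh R, |x - Rh| ≤ |R - Rh| := by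
    intro x hx
    rw [segment_eq_uIcc] at hx
    rcases le_total Rh R with h | h
    · rw [uIcc_of_le h] at hx
      rw [abs_of_nonneg (by linarith [hx.1]), abs_of_nonneg (by linarith)]
      linarith [hx.2]
    · rw [uIcc_of_ge h] at hx
      rw [abs_of_nonpos (by linarith [hx.2]), abs_of_nonpos (by linarith)]
      linarith [hx.1]
  have htay : |ξ R - ξ Rh - deriv ξ Rh * (R - Rh)| ≤ (M₂ * |R - Rh|) * |R - Rh| := by
    have hg : ∀ x ∈ segment ℝ Rh R,
        HasDerivWithinAt (fun y => ξ y - deriv ξ Rh * y) (deriv ξ x - deriv ξ Rh)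
          (segment ℝ Rh R) x := by
      intro x _
      have h1 : HasDerivAt (fun y => deriv ξ Rh * y) (deriv ξ Rh) x := by
        simpa using (hasDerivAt_id x).const_mul (deriv ξ Rh)
      exact ((hdξ x).hasDerivAt.sub h1).hasDerivWithinAt
    have hbd : ∀ x ∈ segment ℝ Rh R,
        ‖deriv ξ x - deriv ξ Rh‖ ≤ M₂ * |R - Rh| := by
      intro x hx
      rw [Real.norm_eq_abs]
      exact (hlip x (hsub hx)).trans (mul_le_mul_of_nonneg_left (hseg x hx) hM₂0)
    have h2 := Convex.norm_image_sub_le_of_norm_hasDerivWithin_le hg hbd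
      (convex_segment _ _) (left_mem_segment ℝ Rh R) (right_mem_segment ℝ Rh R)
    rw [Real.norm_eq_abs, Real.norm_eq_abs] at h2
    calc |ξ R - ξ Rh - deriv ξ Rh * (R - Rh)|
        = |(ξ R - deriv ξ Rh * R) - (ξ Rh - deriv ξ Rh * Rh)| := by ring_nf
      _ ≤ (M₂ * |R - Rh|) * |R - Rh| := h2
  have hid : (N : ℝ) * ξ R - ((N : ℝ) - 1) * ξ Rh - ξ Rh
      + (1 / 2) * (ε₁ ^ 2 + ε₂ ^ 2) * Rh * deriv ξ Rh - ε₁ * ε₂ * deriv ξ Rh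
      = (N : ℝ) * (ξ R - ξ Rh - deriv ξ Rh * (R - Rh))
        + deriv ξ Rh * Rh * ((N : ℝ) * (w - 1 + (a + b) / 2)) := by
    rw [hReq, hadef, hbdef]
    field_simp
    ring
  have hNab : (N:ℝ) * (a^2 + b^2) = (ε₁^4 + ε₂^4) / N := by
    rw [hadef, hbdef]
    field_simp
  have hfin : |(N : ℝ) * ξ R - ((N : ℝ) - 1) * ξ Rh - ξ Rh
      + (1 / 2) * (ε₁ ^ 2 + ε₂ ^ 2) * Rh * deriv ξ Rh - ε₁ * ε₂ * deriv ξ Rh|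
      ≤ (M₁ + 8 * M₂) * ((ε₁^4 + ε₂^4) / N) := by
    rw [hid]
    have h1 : |(N : ℝ) * (ξ R - ξ Rh - deriv ξ Rh * (R - Rh))|
        ≤ 8 * M₂ * ((N:ℝ) * (a^2+b^2)) := by
      rw [abs_mul, abs_of_pos hN0]
      have h2 : |ξ R - ξ Rh - deriv ξ Rh * (R - Rh)| ≤ 8 * M₂ * (a^2 + b^2) := by
        refine htay.trans ?_
        have habs0 : (0:ℝ) ≤ |R - Rh| := abs_nonneg _
        have hq : |R - Rh| * |R - Rh| ≤ 8 * (a^2 + b^2) := by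
          nlinarith [mul_le_mul hδ hδ habs0 (by nlinarith : (0:ℝ) ≤ 2*(a+b)), sq_nonneg (a - b)]
        nlinarith [mul_le_mul_of_nonneg_left hq hM₂0]
      calc (N:ℝ) * |ξ R - ξ Rh - deriv ξ Rh * (R - Rh)| ≤ (N:ℝ) * (8 * M₂ * (a^2 + b^2)) :=
            mul_le_mul_of_nonneg_left h2 hN0.le
        _ = 8 * M₂ * ((N:ℝ) * (a^2+b^2)) := by ring
    have h3 : |deriv ξ Rh * Rh * ((N : ℝ) * (w - 1 + (a + b) / 2))|
        ≤ M₁ * ((N:ℝ) * (a^2 + b^2)) := by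
      rw [abs_mul, abs_mul, abs_mul, abs_of_pos hN0]
      have hd : |deriv ξ Rh| ≤ M₁ := hB₁ Rh hRhmem
      have hdd : |deriv ξ Rh| * |Rh| ≤ M₁ := by
        calc |deriv ξ Rh| * |Rh| ≤ M₁ * 1 := mul_le_mul hd hRh (abs_nonneg _) hM₁0
          _ = M₁ := mul_one _
      apply mul_le_mul hdd
      · exact mul_le_mul_of_nonneg_left hkey hN0.le
      · positivity
      · exact hM₁0
    calc |(N : ℝ) * (ξ R - ξ Rh - deriv ξ Rh * (R - Rh))
          + deriv ξ Rh * Rh * ((N : ℝ) * (w - 1 + (a + b) / 2))|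
        ≤ |(N : ℝ) * (ξ R - ξ Rh - deriv ξ Rh * (R - Rh))|
          + |deriv ξ Rh * Rh * ((N : ℝ) * (w - 1 + (a + b) / 2))| := abs_add_le _ _
      _ ≤ 8 * M₂ * ((N:ℝ) * (a^2+b^2)) + M₁ * ((N:ℝ) * (a^2 + b^2)) := add_le_add h1 h3
      _ = (M₁ + 8 * M₂) * ((N:ℝ) * (a^2 + b^2)) := by ring
      _ = (M₁ + 8 * M₂) * ((ε₁^4 + ε₂^4) / N) := by rw [hNab]
  refine hfin.trans ?_
  rw [div_mul_eq_mul_div, mul_div_assoc]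
  have he4 : (0:ℝ) ≤ (ε₁^4 + ε₂^4) / N := by positivity
  apply mul_le_mul_of_nonneg_right (by linarith) he4
end
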